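/- Let F be a graph with vertex set {1, …, m}, let G be a graph, let γ > 0 satisfy γ < 1/m², and let V₁, …, V_m be pairwise disjoint nonempty subsets of V(G) such that for every edge {j, ℓ} of F one has d(V_j, V_ℓ) ≥ 1−γ, and for every non-edge {j, ℓ} of F (j ≠ ℓ) one has d(V_j, V_ℓ) ≤ γ. Then the number of tuples (v₁, …, v_m) with v_j ∈ V_j for each j such that {v₁, …, v_m} spans an induced copy of F in G (with v_j playing the role of vertex j of F) is at least (1/2)·|V₁|·|V₂|·⋯·|V_m|. -/

import Mathlib

open Finset

/-- The number of edges of `G` with both endpoints in `X`. -/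
def edgesIn {V : Type} [Fintype V] [DecidableEq V] (G : SimpleGraph V) [DecidableRel G.Adj]
    (X : Finset V) : ℕ :=
  (G.edgeFinset.filter fun e => ∀ v ∈ e, v ∈ X).card

/-- The edge density of a vertex set `X`: `e(X) / (|X| choose 2)`. -/
noncomputable def edgeDensityIn {V : Type} [Fintype V] [DecidableEq V] (G : SimpleGraph V)
    [DecidableRel G.Adj] (X : Finset V) : ℝ :=
  (edgesIn G X : ℝ) / (X.card.choose 2 : ℝ)

/-- `X` is `ε`-homogeneous if its edge density is at most `ε` or at least `1 - ε`. -/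
def EpsHomogeneous {V : Type} [Fintype V] [DecidableEq V] (G : SimpleGraph V)
    [DecidableRel G.Adj] (X : Finset V) (ε : ℝ) : Prop :=
  edgeDensityIn G X ≤ ε ∨ 1 - ε ≤ edgeDensityIn G X

/-- The bipartite edge density `d(A,B) = e(A,B)/(|A||B|)` between (disjoint) sets `A`, `B`. -/
noncomputable def pairDensity {V : Type} [Fintype V] [DecidableEq V] (G : SimpleGraph V)
    [DecidableRel G.Adj] (A B : Finset V) : ℝ :=
  (((A ×ˢ B).filter fun p => G.Adj p.1 p.2).card : ℝ) / ((A.card : ℝ) * (B.card : ℝ))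

/-- The number of induced copies of `F` in `G`, i.e. the number of vertex subsets `S`
whose induced subgraph is isomorphic to `F`. -/
noncomputable def inducedCopyCount {V : Type} [Fintype V] [DecidableEq V] (G : SimpleGraph V)
    {m : ℕ} (F : SimpleGraph (Fin m)) : ℕ :=
  Set.ncard {S : Finset V | Nonempty ((G.induce (S : Set V)) ≃g F)}

/-- A graph is bipartite: its vertex set splits into two independent sets. -/
def IsBipartiteGraph {m : ℕ} (F : SimpleGraph (Fin m)) : Prop :=
  ∃ A : Set (Fin m), (∀ u ∈ A, ∀ v ∈ A, ¬ F.Adj u v) ∧ (∀ u ∉ A, ∀ v ∉ A, ¬ F.Adj u v)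

/-- A split graph: its vertex set splits into a clique and an independent set. -/
def IsSplitGraph {m : ℕ} (F : SimpleGraph (Fin m)) : Prop :=
  ∃ A : Set (Fin m), F.IsClique A ∧ (∀ u ∉ A, ∀ v ∉ A, ¬ F.Adj u v)

/-- A family of graphs `(Fg i)` has the Erdős–Hajnal property: there is `c > 0` such that every
graph with no induced copy of any member has a clique or independent set of size `≥ c * n ^ c`. -/
def EHFamily {ι : Type} (Fm : ι → ℕ) (Fg : ∀ i, SimpleGraph (Fin (Fm i))) : Prop :=
  ∃ c : ℝ, 0 < c ∧ ∀ (n : ℕ) (G : SimpleGraph (Fin n)),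
    (∀ i, inducedCopyCount G (Fg i) = 0) →
    ∃ S : Finset (Fin n), (G.IsClique (S : Set (Fin n)) ∨ Gᶜ.IsClique (S : Set (Fin n))) ∧
      c * (n : ℝ) ^ c ≤ (S.card : ℝ)

/-!
Union bound. For `j < ℓ`, the density hypothesis on `(W j, W ℓ)` says that at most a
`γ`-fraction of the pairs in `W j × W ℓ` have the wrong adjacency, hence at most a `γ`-fraction of
the tuples in `∏ W k` are wrong at `(j, ℓ)`. So at most `(m choose 2) γ < 1/2` of all tuples are
wrong somewhere; the remaining ones are injective because the `W j` are disjoint.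
-/

section PairDensity

variable {V : Type} [Fintype V] [DecidableEq V] (G : SimpleGraph V) [DecidableRel G.Adj]

-- Holds also when `A` or `B` is empty, where `pairDensity` is the junk value `0 / 0 = 0`.
lemma card_adj_eq_pairDensity_mul (A B : Finset V) :
    (#{p ∈ A ×ˢ B | G.Adj p.1 p.2} : ℝ) = pairDensity G A B * (#A * #B) := by
  rcases eq_or_ne ((#A : ℝ) * #B) 0 with h | h
  · have hAB : A ×ˢ B = ∅ := by
      rw [← card_eq_zero, card_product]
      exact_mod_cast h
    simp [hAB, h]
  · rw [pairDensity, div_mul_cancel₀ _ h]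

lemma card_not_adj_eq_one_sub_pairDensity_mul (A B : Finset V) :
    (#{p ∈ A ×ˢ B | ¬ G.Adj p.1 p.2} : ℝ) = (1 - pairDensity G A B) * (#A * #B) := by
  have hsplit := card_filter_add_card_filter_not (s := A ×ˢ B) fun p => G.Adj p.1 p.2
  rw [card_product] at hsplit
  have := card_adj_eq_pairDensity_mul G A B
  rw [sub_mul, one_mul, ← this, eq_sub_iff_add_eq']
  exact_mod_cast hsplit

lemma card_filter_not_adj_iff_le {A B : Finset V} {γ : ℝ} (P : Prop) [Decidable P]
    (hP : P → 1 - γ ≤ pairDensity G A B) (hnP : ¬ P → pairDensity G A B ≤ γ) :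
    (#{p ∈ A ×ˢ B | ¬ (G.Adj p.1 p.2 ↔ P)} : ℝ) ≤ γ * (#A * #B) := by
  have hAB : (0 : ℝ) ≤ #A * #B := by positivity
  by_cases h : P
  · simp only [h, iff_true]
    rw [card_not_adj_eq_one_sub_pairDensity_mul]
    exact mul_le_mul_of_nonneg_right (by linarith [hP h]) hAB
  · simp only [h, iff_false, not_not]
    rw [card_adj_eq_pairDensity_mul]
    exact mul_le_mul_of_nonneg_right (hnP h) hAB

end PairDensity

section Tuples

variable {ι V : Type} [Fintype ι] [DecidableEq ι]

lemma card_piFinset_filter_apply_pair_le (W : ι → Finset V) (j ℓ : ι)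
    (R : V → V → Prop) [DecidableRel R] :
    #{v ∈ Fintype.piFinset W | R (v j) (v ℓ)} ≤
      #{p ∈ W j ×ˢ W ℓ | R p.1 p.2} * ∏ k ∈ (univ.erase j).erase ℓ, #(W k) := by
  rw [← card_pi, ← card_product]
  refine card_le_card_of_injOn (fun v => ((v j, v ℓ), fun k _ => v k)) ?_ ?_
  · intro v hv
    simp only [mem_coe, mem_filter, Fintype.mem_piFinset] at hv
    simp only [mem_coe, mem_product, mem_filter, mem_pi]
    exact ⟨⟨⟨hv.1 j, hv.1 ℓ⟩, hv.2⟩, fun k _ => hv.1 k⟩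
  · intro v _ w _ h
    simp only [Prod.mk.injEq, funext_iff] at h
    obtain ⟨⟨hj, hℓ⟩, hrest⟩ := h
    funext k
    by_cases hkj : k = j
    · exact hkj ▸ hj
    by_cases hkℓ : k = ℓ
    · exact hkℓ ▸ hℓ
    exact hrest k (by simp [hkj, hkℓ])

lemma card_piFinset_filter_apply_pair_le_mul_prod (W : ι → Finset V) {j ℓ : ι} (hjℓ : j ≠ ℓ)
    (R : V → V → Prop) [DecidableRel R] {γ : ℝ}
    (hR : (#{p ∈ W j ×ˢ W ℓ | R p.1 p.2} : ℝ) ≤ γ * (#(W j) * #(W ℓ))) :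
    (#{v ∈ Fintype.piFinset W | R (v j) (v ℓ)} : ℝ) ≤ γ * ∏ k, (#(W k) : ℝ) := by
  have hprod : ∏ k, (#(W k) : ℝ) =
      #(W j) * (#(W ℓ) * ∏ k ∈ (univ.erase j).erase ℓ, (#(W k) : ℝ)) := by
    rw [← mul_prod_erase _ _ (mem_univ j),
      ← mul_prod_erase _ _ (mem_erase.2 ⟨hjℓ.symm, mem_univ ℓ⟩)]
  calc (#{v ∈ Fintype.piFinset W | R (v j) (v ℓ)} : ℝ)
      ≤ #{p ∈ W j ×ˢ W ℓ | R p.1 p.2} * ∏ k ∈ (univ.erase j).erase ℓ, (#(W k) : ℝ) := by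
        exact_mod_cast card_piFinset_filter_apply_pair_le W j ℓ R
    _ ≤ γ * (#(W j) * #(W ℓ)) * ∏ k ∈ (univ.erase j).erase ℓ, (#(W k) : ℝ) := by
        gcongr
    _ = γ * ∏ k, (#(W k) : ℝ) := by rw [hprod]; ring

end Tuples

section Counting

variable {ι V : Type} [Fintype ι] [LinearOrder ι] [Fintype V] [DecidableEq V]

lemma card_filter_not_induced_le (F : SimpleGraph ι) [DecidableRel F.Adj]
    (G : SimpleGraph V) [DecidableRel G.Adj] (W : ι → Finset V) {γ : ℝ}
    (hedge : ∀ j ℓ, F.Adj j ℓ → 1 - γ ≤ pairDensity G (W j) (W ℓ))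
    (hnonedge : ∀ j ℓ, j ≠ ℓ → ¬ F.Adj j ℓ → pairDensity G (W j) (W ℓ) ≤ γ) :
    (#{v ∈ Fintype.piFinset W | ¬ ∀ j ℓ, j ≠ ℓ → (G.Adj (v j) (v ℓ) ↔ F.Adj j ℓ)} : ℝ) ≤
      (Fintype.card ι).choose 2 * (γ * ∏ k, (#(W k) : ℝ)) := by
  let pairs : Finset (ι × ι) := {p | p.1 < p.2}
  let bad : ι × ι → Finset (ι → V) := fun p =>
    {v ∈ Fintype.piFinset W | ¬ (G.Adj (v p.1) (v p.2) ↔ F.Adj p.1 p.2)}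
  have hsub : {v ∈ Fintype.piFinset W | ¬ ∀ j ℓ, j ≠ ℓ → (G.Adj (v j) (v ℓ) ↔ F.Adj j ℓ)} ⊆
      pairs.biUnion bad := by
    intro v hv
    simp only [mem_filter, not_forall] at hv
    obtain ⟨hvW, j, ℓ, hjℓ, hviol⟩ := hv
    rcases hjℓ.lt_or_gt with h | h
    · exact mem_biUnion.2 ⟨(j, ℓ), by simpa [pairs] using h, mem_filter.2 ⟨hvW, hviol⟩⟩
    · refine mem_biUnion.2 ⟨(ℓ, j), by simpa [pairs] using h, mem_filter.2 ⟨hvW, ?_⟩⟩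
      rwa [G.adj_comm, F.adj_comm]
  have hbad : ∀ p ∈ pairs,
      (#(bad p) : ℝ) ≤ γ * ∏ k, (#(W k) : ℝ) := by
    intro p hp
    have hp : p.1 ≠ p.2 := (mem_filter.1 hp).2.ne
    exact card_piFinset_filter_apply_pair_le_mul_prod W hp (fun a b => ¬ (G.Adj a b ↔ F.Adj p.1 p.2))
      (card_filter_not_adj_iff_le G _ (hedge p.1 p.2) (hnonedge p.1 p.2 hp))
  calc _ ≤ (#(pairs.biUnion bad) : ℝ) := by
        exact_mod_cast card_le_card hsub
    _ ≤ ∑ p ∈ pairs, (#(bad p) : ℝ) := by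
        exact_mod_cast card_biUnion_le
    _ ≤ ∑ p ∈ pairs, γ * ∏ k, (#(W k) : ℝ) :=
        sum_le_sum hbad
    _ = (Fintype.card ι).choose 2 * (γ * ∏ k, (#(W k) : ℝ)) := by
        rw [sum_const, Fintype.card_product_filter_lt, nsmul_eq_mul]

lemma le_card_filter_induced (F : SimpleGraph ι) [DecidableRel F.Adj]
    (G : SimpleGraph V) [DecidableRel G.Adj] (W : ι → Finset V) {γ : ℝ}
    (hedge : ∀ j ℓ, F.Adj j ℓ → 1 - γ ≤ pairDensity G (W j) (W ℓ))
    (hnonedge : ∀ j ℓ, j ≠ ℓ → ¬ F.Adj j ℓ → pairDensity G (W j) (W ℓ) ≤ γ) :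
    (1 - (Fintype.card ι).choose 2 * γ) * ∏ k, (#(W k) : ℝ) ≤
      #{v ∈ Fintype.piFinset W | ∀ j ℓ, j ≠ ℓ → (G.Adj (v j) (v ℓ) ↔ F.Adj j ℓ)} := by
  have hsplit := card_filter_add_card_filter_not (s := Fintype.piFinset W)
    fun v => ∀ j ℓ, j ≠ ℓ → (G.Adj (v j) (v ℓ) ↔ F.Adj j ℓ)
  rw [Fintype.card_piFinset] at hsplit
  have hbad := card_filter_not_induced_le F G W hedge hnonedge
  have hcast : ((∏ k, #(W k) : ℕ) : ℝ) = ∏ k, (#(W k) : ℝ) := Nat.cast_prod _ _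
  rw [← hsplit, Nat.cast_add] at hcast
  linarith

end Counting

lemma injective_of_mem_of_pairwise_disjoint {ι V : Type} {W : ι → Finset V} {v : ι → V}
    (hdisj : ∀ j ℓ, j ≠ ℓ → Disjoint (W j) (W ℓ)) (hv : ∀ j, v j ∈ W j) :
    Function.Injective v := by
  intro j ℓ h
  by_contra hjℓ
  exact disjoint_left.1 (hdisj j ℓ hjℓ) (hv j) (h ▸ hv ℓ)

lemma cast_choose_two_mul_le_half {m : ℕ} {γ : ℝ} (hγ0 : 0 ≤ γ) (hγ : γ < 1 / (m : ℝ) ^ 2) :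
    (m.choose 2 : ℝ) * γ ≤ 1 / 2 := by
  have hmγ : (m : ℝ) ^ 2 * γ ≤ 1 := by
    rcases Nat.eq_zero_or_pos m with rfl | hm
    · simp
    · have : (0 : ℝ) < (m : ℝ) ^ 2 := by positivity
      rw [lt_div_iff₀ this] at hγ
      linarith
  rw [Nat.cast_choose_two]
  nlinarith [mul_nonneg (Nat.cast_nonneg m : (0 : ℝ) ≤ m) hγ0]

theorem counting_lemma_general {m : ℕ} (F : SimpleGraph (Fin m))
    {V : Type} [Fintype V] [DecidableEq V] (G : SimpleGraph V) [DecidableRel G.Adj]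
    (γ : ℝ) (hγ0 : 0 < γ) (hγ : γ < 1 / (m : ℝ) ^ 2)
    (W : Fin m → Finset V)
    (hdisj : ∀ j ℓ, j ≠ ℓ → Disjoint (W j) (W ℓ))
    (hedge : ∀ j ℓ, F.Adj j ℓ → 1 - γ ≤ pairDensity G (W j) (W ℓ))
    (hnonedge : ∀ j ℓ, j ≠ ℓ → ¬ F.Adj j ℓ → pairDensity G (W j) (W ℓ) ≤ γ) :
    (1 / 2 : ℝ) * ∏ j, ((W j).card : ℝ) ≤
      (Set.ncard {v : Fin m → V | (∀ j, v j ∈ W j) ∧ Function.Injective v ∧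
        ∀ j ℓ, j ≠ ℓ → (G.Adj (v j) (v ℓ) ↔ F.Adj j ℓ)} : ℝ) := by
  classical
  have hgood : {v : Fin m → V | (∀ j, v j ∈ W j) ∧ Function.Injective v ∧
      ∀ j ℓ, j ≠ ℓ → (G.Adj (v j) (v ℓ) ↔ F.Adj j ℓ)} =
      ↑({v ∈ Fintype.piFinset W | ∀ j ℓ, j ≠ ℓ → (G.Adj (v j) (v ℓ) ↔ F.Adj j ℓ)} :
        Finset (Fin m → V)) := by
    ext v
    simp only [coe_filter, Fintype.mem_piFinset]
    exact ⟨fun ⟨hvW, _, hv⟩ => ⟨hvW, hv⟩,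
      fun ⟨hvW, hv⟩ => ⟨hvW, injective_of_mem_of_pairwise_disjoint hdisj hvW, hv⟩⟩
  rw [hgood, Set.ncard_coe_finset]
  have hinduced := le_card_filter_induced F G W hedge hnonedge
  rw [Fintype.card_fin] at hinduced
  have hpairs := cast_choose_two_mul_le_half hγ0.le hγ
  calc (1 / 2 : ℝ) * ∏ j, (#(W j) : ℝ) ≤ (1 - m.choose 2 * γ) * ∏ j, (#(W j) : ℝ) := by
        gcongr
        linarith
    -- the two filters differ only in their decidability instances
    _ ≤ _ := by convert hinduced

/-- **Counting lemma.** Let `F` be a graph on `{1, …, m}`, let `0 < γ < 1/m²`, and let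
`W 1, …, W m` be pairwise disjoint nonempty vertex sets of `G` such that pairs corresponding
to edges of `F` have density `≥ 1 - γ` and pairs corresponding to non-edges have density
`≤ γ`. Then at least half of the tuples `(v₁, …, v_m) ∈ W 1 × ⋯ × W m` span an induced copy
of `F`, with `v j` playing the role of vertex `j`. -/
theorem counting_lemma {m : ℕ} (F : SimpleGraph (Fin m))
    {V : Type} [Fintype V] [DecidableEq V] (G : SimpleGraph V) [DecidableRel G.Adj]
    (γ : ℝ) (hγ0 : 0 < γ) (hγ : γ < 1 / (m : ℝ) ^ 2)
    (W : Fin m → Finset V)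
    (hne : ∀ j, (W j).Nonempty)
    (hdisj : ∀ j ℓ, j ≠ ℓ → Disjoint (W j) (W ℓ))
    (hedge : ∀ j ℓ, F.Adj j ℓ → 1 - γ ≤ pairDensity G (W j) (W ℓ))
    (hnonedge : ∀ j ℓ, j ≠ ℓ → ¬ F.Adj j ℓ → pairDensity G (W j) (W ℓ) ≤ γ) :
    (1 / 2 : ℝ) * ∏ j, ((W j).card : ℝ) ≤
      (Set.ncard {v : Fin m → V | (∀ j, v j ∈ W j) ∧ Function.Injective v ∧
        ∀ j ℓ, j ≠ ℓ → (G.Adj (v j) (v ℓ) ↔ F.Adj j ℓ)} : ℝ) :=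
  counting_lemma_general F G γ hγ0 hγ W hdisj hedge hnonedge
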